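/- Let M and M' be two finite multisets of bars, i.e. of half-open intervals [s, e) with starting point s ∈ ℝ and endpoint e ∈ ℝ ∪ {+∞} satisfying s < e. Suppose that for every s ∈ ℝ and every l ∈ ℝ, the number of bars in M with starting point equal to s that persist at level l (i.e. contain l) equals the corresponding number for M'. Then M = M'. (This is the paper's Barcode Recovery lemma: a barcode is recovered from the counts of bars with given starting points persisting at given levels.) -/

import Mathlib

/-!
Fix a starting point `s` and let `N` be the multiset of endpoints of the bars starting at `s`;
the data are the counts `#{e ∈ N | l < e}` for levels `l ≥ s`. For `b > s`, choose a level
`l ∈ [s, b)` so close to `b` that no endpoint lies in `(l, b)`; then the multiplicity of `b`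
in `N` is `#{e > l} - #{e > b}`, where `#{e > ⊤} = 0` covers infinite bars.
-/

namespace Multiset

variable {α : Type*} [LinearOrder α]

theorem exists_gap_below (N : Multiset α) {s b : α} (hsb : s < b) :
    ∃ l, s ≤ l ∧ l < b ∧ ∀ x ∈ N, l < x → b ≤ x := by
  let l := (insert s (N.filter (· < b)).toFinset).max' (Finset.insert_nonempty _ _)
  refine ⟨l, Finset.le_max' _ _ (Finset.mem_insert_self _ _), ?_, fun x hx hlx => ?_⟩
  · refine (Finset.max'_lt_iff _ _).2 fun y hy => ?_
    rcases Finset.mem_insert.1 hy with rfl | hy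
    · exact hsb
    · exact (mem_filter.1 (mem_toFinset.1 hy)).2
  · by_contra! hxb
    exact (Finset.le_max' _ x (Finset.mem_insert_of_mem (by simp [hx, hxb]))).not_gt hlx

theorem card_filter_lt_eq_count_add (N : Multiset α) {l b : α} (hlb : l < b)
    (hgap : ∀ x ∈ N, l < x → b ≤ x) :
    card (N.filter (l < ·)) = count b N + card (N.filter (b < ·)) := by
  have hsplit : N.filter (l < ·) = N.filter (b = ·) + N.filter (b < ·) := by
    have hdisjoint : N.filter (fun x => b = x ∧ b < x) = 0 :=
      filter_eq_nil.2 fun x _ h => h.2.ne h.1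
    rw [filter_add_filter, hdisjoint, add_zero]
    refine filter_congr fun x hx => ⟨fun hlx => (hgap x hx hlx).eq_or_lt, ?_⟩
    rintro (rfl | hbx)
    exacts [hlb, hlb.trans hbx]
  rw [hsplit, card_add, count_eq_card_filter_eq]

theorem eq_of_card_filter_lt_eq {N N' : Multiset α} {s : α} (hN : ∀ x ∈ N, s < x)
    (hN' : ∀ x ∈ N', s < x)
    (h : ∀ l, s ≤ l → card (N.filter (l < ·)) = card (N'.filter (l < ·))) : N = N' := by
  ext b
  by_cases hsb : s < b
  · obtain ⟨l, hsl, hlb, hgap⟩ := exists_gap_below (N + N') hsb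
    have hcount := h l hsl
    rw [card_filter_lt_eq_count_add N hlb fun x hx => hgap x (mem_add.2 (Or.inl hx)),
      card_filter_lt_eq_count_add N' hlb fun x hx => hgap x (mem_add.2 (Or.inr hx)),
      h b hsb.le] at hcount
    exact Nat.add_right_cancel hcount
  · rw [count_eq_zero_of_notMem fun hb => hsb (hN b hb),
      count_eq_zero_of_notMem fun hb => hsb (hN' b hb)]

end Multiset

noncomputable def endpointsFrom (M : Multiset (ℝ × WithTop ℝ)) (s : ℝ) : Multiset (WithTop ℝ) :=
  (M.filter (·.1 = s)).map Prod.snd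

theorem count_endpointsFrom (M : Multiset (ℝ × WithTop ℝ)) (s : ℝ) (e : WithTop ℝ) :
    (endpointsFrom M s).count e = M.count (s, e) := by
  rw [endpointsFrom, Multiset.count_map, Multiset.filter_filter, Multiset.count_eq_card_filter_eq]
  congr 1
  refine Multiset.filter_congr fun p _ => ?_
  constructor
  · rintro ⟨rfl, h⟩; ext <;> simp_all
  · rintro rfl; simp

theorem card_filter_lt_endpointsFrom (M : Multiset (ℝ × WithTop ℝ)) {s l : ℝ} (hsl : s ≤ l) :
    ((endpointsFrom M s).filter ((l : WithTop ℝ) < ·)).card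
      = (M.filter fun p => p.1 = s ∧ s ≤ l ∧ (l : WithTop ℝ) < p.2).card := by
  rw [endpointsFrom, Multiset.filter_map, Multiset.card_map, Multiset.filter_filter]
  congr 1
  exact Multiset.filter_congr fun p _ => by simp [hsl, and_comm]

theorem lt_of_mem_endpointsFrom {M : Multiset (ℝ × WithTop ℝ)}
    (hM : ∀ p ∈ M, (p.1 : WithTop ℝ) < p.2) {s : ℝ} {e : WithTop ℝ}
    (he : e ∈ endpointsFrom M s) : (s : WithTop ℝ) < e := by
  obtain ⟨p, hp, rfl⟩ := Multiset.mem_map.1 he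
  obtain ⟨hpM, rfl⟩ := Multiset.mem_filter.1 hp
  exact hM p hpM

/-- Barcode recovery: a finite multiset of bars `[s, e)` (with
`s ∈ ℝ`, `e ∈ ℝ ∪ {+∞}`, `s < e`) is determined by, for every starting point `s` and
level `l`, the number of bars starting at `s` that persist at level `l`. -/
theorem statement10 (M M' : Multiset (ℝ × WithTop ℝ))
    (hM : ∀ p ∈ M, (p.1 : WithTop ℝ) < p.2)
    (hM' : ∀ p ∈ M', (p.1 : WithTop ℝ) < p.2)
    (hcount : ∀ s l : ℝ,
      (M.filter fun p => p.1 = s ∧ s ≤ l ∧ (l : WithTop ℝ) < p.2).card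
        = (M'.filter fun p => p.1 = s ∧ s ≤ l ∧ (l : WithTop ℝ) < p.2).card) :
    M = M' := by
  have hfibre : ∀ s, endpointsFrom M s = endpointsFrom M' s := by
    intro s
    refine Multiset.eq_of_card_filter_lt_eq (fun _ => lt_of_mem_endpointsFrom hM)
      (fun _ => lt_of_mem_endpointsFrom hM') fun l hsl => ?_
    cases l with
    | top => simp only [not_top_lt, Multiset.filter_false]
    | coe l =>
      have hsl : s ≤ l := WithTop.coe_le_coe.1 hsl
      rw [card_filter_lt_endpointsFrom M hsl, card_filter_lt_endpointsFrom M' hsl, hcount]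
  ext ⟨s, e⟩
  rw [← count_endpointsFrom, ← count_endpointsFrom, hfibre]
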